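/- arXiv:1606.05757 — 8 statements merged into one kernel-verified Lean document; each statement's English description precedes it below -/
import Mathlib

section
/- Let n ≥ 3 be an integer, 0 < κ < 1, and λ ∈ ℂ with 0 < |λ| < R_n(κ). Then for every z ∈ ℂ with |z + λ| ≤ κ|λ|, one has z^n ≠ λ and |f_λ(z) + λ| < κ|λ|. In particular, f_λ maps the closed disk of radius κ|λ| centered at −λ into its interior. -/
/-- The threshold `R_n(κ) = (1/(1+κ)) · (2κ/((1+κ)(√(κ²+4κ)+κ)))^{1/(n-1)}`. -/
noncomputable def Rn (n : ℕ) (κ : ℝ) : ℝ :=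
  (1 / (1 + κ)) *
    (2 * κ / ((1 + κ) * (Real.sqrt (κ ^ 2 + 4 * κ) + κ))) ^ ((1 : ℝ) / ((n : ℝ) - 1))

/-- For `n ≥ 3`, `0 < κ < 1`, `0 < |λ| < R_n(κ)`: every `z` with `|z + λ| ≤ κ|λ|`
satisfies `z^n ≠ λ` and `|f_λ(z) + λ| < κ|λ|`. -/
theorem stmt6 (n : ℕ) (hn : 3 ≤ n) (κ : ℝ) (hκ0 : 0 < κ) (hκ1 : κ < 1)
    (lam : ℂ) (hlam : 0 < ‖lam‖) (hsmall : ‖lam‖ < Rn n κ)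
    (z : ℂ) (hz : ‖z + lam‖ ≤ κ * ‖lam‖) :
    z ^ n ≠ lam ∧
      ‖(z ^ n + lam ^ 2 / (z ^ n - lam)) + lam‖ < κ * ‖lam‖ := by
  set r := ‖lam‖ with hrdef
  have hr0 : 0 < r := hlam
  set s := Real.sqrt (κ ^ 2 + 4 * κ) with hsdef
  have hs2 : s ^ 2 = κ ^ 2 + 4 * κ := Real.sq_sqrt (by positivity)
  have hsκ : κ < s := by
    have h := Real.sqrt_lt_sqrt (by positivity : (0:ℝ) ≤ κ ^ 2)
      (show κ ^ 2 < κ ^ 2 + 4 * κ by nlinarith)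
    rwa [Real.sqrt_sq hκ0.le] at h
  have hs0 : 0 < s := hκ0.trans hsκ
  have hs2' : s < κ + 2 := by nlinarith
  have h1κ : (0:ℝ) < 1 + κ := by linarith
  have hsum : (0:ℝ) < s + κ := by linarith
  set C := 2 * κ / ((1 + κ) * (s + κ)) with hCdef
  have hC0 : 0 < C := by
    apply div_pos (by linarith) (mul_pos h1κ hsum)
  -- |z| ≤ (1+κ) r
  have hzabs : ‖z‖ ≤ (1 + κ) * r := by
    have h1 : ‖z‖ ≤ ‖z + lam‖ + ‖lam‖ := by
      have := norm_add_le (z + lam) (-lam)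
      simpa using this
    nlinarith
  set a := ‖z ^ n‖ with hadef
  have ha0 : 0 ≤ a := norm_nonneg _
  have han : a ≤ ((1 + κ) * r) ^ n := by
    rw [hadef, norm_pow]
    exact pow_le_pow_left₀ (norm_nonneg z) hzabs n
  -- threshold consequence
  set m := n - 1 with hmdef
  have hm1 : 1 ≤ m := by omega
  have hmcast : (m : ℝ) = (n : ℝ) - 1 := by
    have : (m : ℕ) + 1 = n := by omega
    have := congrArg (fun k : ℕ => (k : ℝ)) this
    push_cast at this
    linarith
  have hmne : ((n : ℝ) - 1) ≠ 0 := by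
    have : (3 : ℝ) ≤ (n : ℝ) := by exact_mod_cast hn
    linarith
  have hrC : (1 + κ) * r < C ^ ((1 : ℝ) / ((n : ℝ) - 1)) := by
    rw [Rn] at hsmall
    have := mul_lt_mul_of_pos_left hsmall h1κ
    rw [← mul_assoc] at this
    field_simp at this
    convert this using 2
    rw [hCdef, hsdef, show κ * (κ + 4) = κ ^ 2 + 4 * κ by ring]; ring
  have hpow : ((1 + κ) * r) ^ m < C := by
    have h2 : ((1 + κ) * r) ^ m < (C ^ ((1 : ℝ) / ((n : ℝ) - 1))) ^ m :=
      pow_lt_pow_left₀ hrC (by positivity) (by omega)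
    have h3 : (C ^ ((1 : ℝ) / ((n : ℝ) - 1))) ^ m = C := by
      rw [← Real.rpow_natCast (C ^ ((1 : ℝ) / ((n : ℝ) - 1))) m,
        ← Real.rpow_mul hC0.le, hmcast]
      rw [one_div, inv_mul_cancel₀ hmne, Real.rpow_one]
    rwa [h3] at h2
  have hCκ : C * (1 + κ) = (s - κ) / 2 := by
    rw [hCdef, div_mul_eq_mul_div, div_eq_div_iff (mul_pos h1κ hsum).ne' (by norm_num)]
    nlinarith
  have hkey : a < r * (s - κ) / 2 := by
    have hn' : n = m + 1 := by omega
    have h4 : ((1 + κ) * r) ^ n = ((1 + κ) * r) ^ m * ((1 + κ) * r) := by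
      rw [hn', pow_succ]
    have h5 : ((1 + κ) * r) ^ m * ((1 + κ) * r) < C * ((1 + κ) * r) :=
      mul_lt_mul_of_pos_right hpow (by positivity)
    have h6 : C * ((1 + κ) * r) = r * (s - κ) / 2 := by
      rw [← mul_assoc] at *
      rw [hCκ]; ring
    calc a ≤ ((1 + κ) * r) ^ n := han
      _ = ((1 + κ) * r) ^ m * ((1 + κ) * r) := h4
      _ < C * ((1 + κ) * r) := h5
      _ = r * (s - κ) / 2 := h6
  have har : a < r := by nlinarith
  have hne : z ^ n ≠ lam := by
    intro h
    rw [hadef, h] at har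
    exact lt_irrefl _ (har.trans_le (le_refl r))
  have hden : z ^ n - lam ≠ 0 := sub_ne_zero.mpr hne
  have hd : r - a ≤ ‖z ^ n - lam‖ := by
    have h := norm_add_le (lam - z ^ n) (z ^ n)
    simp only [sub_add_cancel] at h
    have h2 : ‖lam - z ^ n‖ = ‖z ^ n - lam‖ :=
      norm_sub_rev lam (z ^ n)
    linarith
  have hdpos : 0 < ‖z ^ n - lam‖ := by linarith
  refine ⟨hne, ?_⟩
  have heq : z ^ n + lam ^ 2 / (z ^ n - lam) + lam = (z ^ n) ^ 2 / (z ^ n - lam) := by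
    field_simp
    ring
  rw [heq, norm_div, norm_pow]
  rw [div_lt_iff₀ hdpos]
  have hq : a ^ 2 < κ * r * (r - a) := by
    have h1 : a ^ 2 < (r * (s - κ) / 2) ^ 2 :=
      pow_lt_pow_left₀ hkey ha0 (by norm_num)
    have h2 : κ * r * a < κ * r * (r * (s - κ) / 2) :=
      mul_lt_mul_of_pos_left hkey (mul_pos hκ0 hr0)
    have h3 : (r * (s - κ) / 2) ^ 2 + κ * r * (r * (s - κ) / 2) = κ * r * r := by
      linear_combination (r ^ 2 / 4) * hs2
    have h4 : κ * r * (r - a) = κ * r * r - κ * r * a := by ring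
    rw [h4]
    linarith
  calc a ^ 2 < κ * r * (r - a) := hq
    _ ≤ κ * r * ‖z ^ n - lam‖ :=
      mul_le_mul_of_nonneg_left hd (by positivity)
end

section
/- Let n ≥ 3 be an integer, 0 < κ < 1, and λ ∈ ℂ with 0 < |λ| < R_n(κ). Then for every integer k ≥ 0, the k-th iterate f_λ^{∘k}(−λ) lies in the closed disk of radius κ|λ| centered at −λ (in particular every point w on this orbit satisfies w^n ≠ λ, so the orbit never meets a pole of f_λ). Hence the forward orbit of the free critical value v₀ = −λ remains in this disk for all time. -/
/-- For `n ≥ 3`, `0 < κ < 1`, `0 < |λ| < R_n(κ)`: for every `k ≥ 0`, the iterate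
`f_λ^{∘k}(-λ)` stays in the closed disk `D̄(-λ, κ|λ|)` and never meets a pole. -/
theorem stmt8 (n : ℕ) (hn : 3 ≤ n) (κ : ℝ) (hκ0 : 0 < κ) (hκ1 : κ < 1)
    (lam : ℂ) (hlam : 0 < ‖lam‖) (hsmall : ‖lam‖ < Rn n κ)
    (k : ℕ) :
    ‖((fun w : ℂ => w ^ n + lam ^ 2 / (w ^ n - lam))^[k] (-lam) + lam)‖ ≤
        κ * ‖lam‖ ∧
      ((fun w : ℂ => w ^ n + lam ^ 2 / (w ^ n - lam))^[k] (-lam)) ^ n ≠ lam := by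
  set F : ℂ → ℂ := fun w : ℂ => w ^ n + lam ^ 2 / (w ^ n - lam) with hF
  set A : ℝ := ‖lam‖ with hA
  set s : ℝ := Real.sqrt (κ ^ 2 + 4 * κ) with hs
  set t : ℝ := (s - κ) / 2 with ht
  have hs0 : 0 ≤ κ ^ 2 + 4 * κ := by nlinarith
  have hsq : s ^ 2 = κ ^ 2 + 4 * κ := Real.sq_sqrt hs0
  have hsnn : 0 ≤ s := Real.sqrt_nonneg _
  have hsκ : κ < s := by nlinarith
  have ht0 : 0 < t := by rw [ht]; linarith
  have hteq : t ^ 2 = κ * (1 - t) := by rw [ht]; nlinarith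
  have ht1 : t < 1 := by nlinarith
  set C : ℝ := 2 * κ / ((1 + κ) * (s + κ)) with hC
  have hκ1' : (0:ℝ) < 1 + κ := by linarith
  have hsκ' : (0:ℝ) < s + κ := by linarith
  have hCpos : 0 < C := by positivity
  have hCt : C * (1 + κ) = t := by
    rw [hC, ht]
    field_simp
    nlinarith
  -- key power inequality
  have hne1 : ((n : ℝ) - 1) ≠ 0 := by
    have : (3:ℝ) ≤ (n:ℝ) := by exact_mod_cast hn
    linarith
  have hlt : ((1 + κ) * A) ^ (n - 1) < C := by
    have h1 : (1 + κ) * A < C ^ ((1 : ℝ) / ((n : ℝ) - 1)) := by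
      have := hsmall
      rw [Rn] at this
      calc (1 + κ) * A < (1 + κ) * ((1 / (1 + κ)) * C ^ ((1 : ℝ) / ((n : ℝ) - 1))) := by
            exact mul_lt_mul_of_pos_left this hκ1'
        _ = C ^ ((1 : ℝ) / ((n : ℝ) - 1)) := by field_simp
    have h2 : ((1 + κ) * A) ^ (n - 1) < (C ^ ((1 : ℝ) / ((n : ℝ) - 1))) ^ (n - 1) := by
      apply pow_lt_pow_left₀ h1 (by positivity)
      omega
    have h3 : (C ^ ((1 : ℝ) / ((n : ℝ) - 1))) ^ (n - 1) = C := by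
      rw [← Real.rpow_natCast (C ^ ((1 : ℝ) / ((n : ℝ) - 1))) (n - 1),
        ← Real.rpow_mul hCpos.le]
      have hcast : ((n - 1 : ℕ) : ℝ) = (n : ℝ) - 1 := by
        have : (1:ℕ) ≤ n := by omega
        push_cast [Nat.cast_sub this]
        ring
      rw [hcast, one_div, inv_mul_cancel₀ hne1, Real.rpow_one]
    linarith [h3 ▸ h2]
  -- key invariance lemma
  have key : ∀ w : ℂ, ‖w + lam‖ ≤ κ * A →
      w ^ n ≠ lam ∧ ‖F w + lam‖ ≤ κ * A := by
    intro w hw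
    have hwb : ‖w‖ ≤ (1 + κ) * A := by
      calc ‖w‖ = ‖(w + lam) + (-lam)‖ := by ring_nf
        _ ≤ ‖w + lam‖ + ‖-lam‖ := norm_add_le _ _
        _ ≤ κ * A + A := by rw [norm_neg]; linarith
        _ = (1 + κ) * A := by ring
    have hu : ‖w ^ n‖ < t * A := by
      have h1 : ‖w ^ n‖ = ‖w‖ ^ n := norm_pow _ _
      have h2 : ‖w‖ ^ n ≤ ((1 + κ) * A) ^ n :=
        pow_le_pow_left₀ (norm_nonneg _) hwb n
      have h3 : ((1 + κ) * A) ^ n = ((1 + κ) * A) ^ (n - 1) * ((1 + κ) * A) := by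
        rw [← pow_succ, Nat.sub_add_cancel (by omega)]
      have h4 : ((1 + κ) * A) ^ (n - 1) * ((1 + κ) * A) < C * ((1 + κ) * A) :=
        mul_lt_mul_of_pos_right hlt (by positivity)
      have h5 : C * ((1 + κ) * A) = t * A := by rw [← mul_assoc, hCt]
      rw [h1]
      calc ‖w‖ ^ n ≤ ((1 + κ) * A) ^ n := h2
        _ = _ := h3
        _ < C * ((1 + κ) * A) := h4
        _ = t * A := h5
    have hden : (1 - t) * A ≤ ‖w ^ n - lam‖ := by
      have h1 : A - ‖w ^ n‖ ≤ ‖lam - w ^ n‖ := by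
        have := norm_sub_norm_le lam (w ^ n)
        simpa [hA] using this
      have h2 : ‖lam - w ^ n‖ = ‖w ^ n - lam‖ := by
        rw [← norm_neg]; ring_nf
      nlinarith
    have hdpos : 0 < ‖w ^ n - lam‖ := by
      have : 0 < (1 - t) * A := mul_pos (by linarith) hlam
      linarith
    have hne : w ^ n - lam ≠ 0 := by
      intro h; rw [h] at hdpos; simp at hdpos
    have hne' : w ^ n ≠ lam := sub_ne_zero.mp hne
    refine ⟨hne', ?_⟩
    have hid : F w + lam = (w ^ n) ^ 2 / (w ^ n - lam) := by
      rw [hF]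
      field_simp
      ring
    rw [hid, norm_div, norm_pow]
    have hnum : (‖w ^ n‖) ^ 2 ≤ (t * A) ^ 2 :=
      pow_le_pow_left₀ (norm_nonneg _) hu.le 2
    calc (‖w ^ n‖) ^ 2 / ‖w ^ n - lam‖
        ≤ (t * A) ^ 2 / ((1 - t) * A) := by
          apply div_le_div₀ (by positivity) hnum (mul_pos (by linarith : (0:ℝ) < 1 - t) hlam) hden
      _ = κ * A := by
          rw [mul_pow, hteq]
          have hA0 : A ≠ 0 := ne_of_gt hlam
          have h1t : (1:ℝ) - t ≠ 0 := by linarith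
          field_simp
  have main : ∀ m : ℕ, ‖F^[m] (-lam) + lam‖ ≤ κ * A := by
    intro m
    induction m with
    | zero => simp; positivity
    | succ m ih =>
        rw [Function.iterate_succ_apply']
        exact (key _ ih).2
  exact ⟨main k, (key _ (main k)).1⟩
end

section
/- Let n ≥ 3 be an integer and λ ∈ ℂ with |λ| ≥ R_n(1/5). Then for every z ∈ ℂ with |z| ≥ 3|λ|, one has z^n ≠ λ and |f_λ(z)| > 3|λ|. In particular, f_λ maps the complement of the open disk of radius 3|λ| centered at 0 into its interior. -/
lemma Rn_lb (n : ℕ) (hn : 3 ≤ n) : (2:ℝ)/5 ≤ Rn n (1/5) := by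
  unfold Rn
  set s : ℝ := Real.sqrt ((1/5) ^ 2 + 4 * (1/5)) with hs
  have hs2 : s ^ 2 = 21/25 := by
    rw [hs, Real.sq_sqrt (by norm_num)]; norm_num
  have hs0 : 0 ≤ s := Real.sqrt_nonneg _
  have hsu : s ≤ 0.92 := by nlinarith
  have hsl : 0.9 ≤ s := by nlinarith
  set b : ℝ := 2 * (1/5) / ((1 + 1/5) * (s + 1/5)) with hb
  have hD : (0:ℝ) < (1 + 1/5) * (s + 1/5) := by nlinarith
  have hb0 : 0 < b := by positivity
  have hbl : 0.2304 ≤ b := by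
    rw [hb, le_div_iff₀ hD]; nlinarith
  have hbu : b ≤ 1 := by
    rw [hb, div_le_one hD]; nlinarith
  have hexp : (1:ℝ) / ((n:ℝ) - 1) ≤ 1/2 := by
    have h3 : (3:ℝ) ≤ (n:ℝ) := by exact_mod_cast hn
    rw [div_le_div_iff₀ (by linarith) (by norm_num)]; linarith
  have h1 : b ^ ((1:ℝ)/2) ≤ b ^ ((1:ℝ) / ((n:ℝ) - 1)) :=
    Real.rpow_le_rpow_of_exponent_ge hb0 hbu hexp
  have h2 : (0.48:ℝ) ≤ b ^ ((1:ℝ)/2) := by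
    rw [← Real.sqrt_eq_rpow]
    have hsq : Real.sqrt b ^ 2 = b := Real.sq_sqrt hb0.le
    have hsqn : 0 ≤ Real.sqrt b := Real.sqrt_nonneg b
    nlinarith
  nlinarith [h1.trans' h2]

/-- For `n ≥ 3` and `|λ| ≥ R_n(1/5)`: every `z` with `|z| ≥ 3|λ|` satisfies
`z^n ≠ λ` and `|f_λ(z)| > 3|λ|`. -/
theorem stmt9 (n : ℕ) (hn : 3 ≤ n) (lam : ℂ) (hlam : Rn n (1 / 5) ≤ ‖lam‖)
    (z : ℂ) (hz : 3 * ‖lam‖ ≤ ‖z‖) :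
    z ^ n ≠ lam ∧
      3 * ‖lam‖ < ‖z ^ n + lam ^ 2 / (z ^ n - lam)‖ := by
  set a : ℝ := ‖lam‖ with ha
  have ha2 : (2:ℝ)/5 ≤ a := le_trans (Rn_lb n hn) hlam
  have ha0 : (0:ℝ) < a := by linarith
  have hzn : (108:ℝ)/25 * a ≤ ‖z ^ n‖ := by
    rw [norm_pow]
    calc (108:ℝ)/25 * a = 27 * (2/5)^2 * a := by ring
      _ ≤ 27 * a^2 * a := by nlinarith
      _ = (3*a)^3 := by ring
      _ ≤ (3*a)^n := pow_le_pow_right₀ (by linarith) hn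
      _ ≤ ‖z‖^n := pow_le_pow_left₀ (by linarith) hz n
  have hne : z ^ n ≠ lam := by
    intro h
    rw [h, ← ha] at hzn
    nlinarith
  have hd : (83:ℝ)/25 * a ≤ ‖z ^ n - lam‖ := by
    have h := norm_sub_norm_le (z ^ n) lam
    rw [← ha] at h
    linarith
  have hd0 : (0:ℝ) < ‖z ^ n - lam‖ := by nlinarith
  have hq : ‖lam ^ 2 / (z ^ n - lam)‖ ≤ 25/83 * a := by
    rw [norm_div, norm_pow, ← ha, div_le_iff₀ hd0]
    nlinarith
  refine ⟨hne, ?_⟩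
  have h := norm_sub_le (z ^ n + lam ^ 2 / (z ^ n - lam)) (lam ^ 2 / (z ^ n - lam))
  rw [add_sub_cancel_right] at h
  nlinarith
end

section
/- Let n ≥ 3 be an integer and λ ∈ ℂ with |λ| ≥ R_n(1/5). Then for every integer k ≥ 0, the k-th iterate f_λ^{∘k}(3λ) satisfies |f_λ^{∘k}(3λ)| ≥ 3|λ| (in particular every point w on this orbit satisfies w^n ≠ λ, so the orbit never meets a pole of f_λ). Hence the forward orbit of the free critical value v₁ = 3λ remains in the region {|z| ≥ 3|λ|} for all time. -/
/-- For `n ≥ 3` and `|λ| ≥ R_n(1/5)`: for every `k ≥ 0`, the iterate `f_λ^{∘k}(3λ)`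
satisfies `|f_λ^{∘k}(3λ)| ≥ 3|λ|` and never meets a pole. -/
theorem stmt10 (n : ℕ) (hn : 3 ≤ n) (lam : ℂ) (hlam : Rn n (1 / 5) ≤ ‖lam‖)
    (k : ℕ) :
    3 * ‖lam‖ ≤
        ‖(fun w : ℂ => w ^ n + lam ^ 2 / (w ^ n - lam))^[k] (3 * lam)‖ ∧
      ((fun w : ℂ => w ^ n + lam ^ 2 / (w ^ n - lam))^[k] (3 * lam)) ^ n ≠ lam := by
  set r := ‖lam‖ with hrdef
  set B : ℝ := 5 / (3 * (Real.sqrt 21 + 1)) with hBdef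
  have hs21nn : (0:ℝ) ≤ Real.sqrt 21 := Real.sqrt_nonneg _
  have hs21sq : Real.sqrt 21 ^ 2 = 21 := Real.sq_sqrt (by norm_num)
  have hs21 : Real.sqrt 21 ≤ 5 := by nlinarith
  have hBpos : (0:ℝ) < B := by positivity
  -- simplify Rn
  have h1 : Real.sqrt ((1/5:ℝ)^2 + 4*(1/5)) = Real.sqrt 21 / 5 := by
    rw [show ((1/5:ℝ)^2 + 4*(1/5)) = 21 * (1/5)^2 by norm_num,
      Real.sqrt_mul (by norm_num : (0:ℝ) ≤ 21), Real.sqrt_sq (by norm_num : (0:ℝ) ≤ 1/5)]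
    ring
  have hval : Rn n (1/5) = (5/6 : ℝ) * B ^ ((1:ℝ)/((n:ℝ)-1)) := by
    unfold Rn
    rw [h1]
    have hbase : 2 * (1/5:ℝ) / ((1 + 1/5) * (Real.sqrt 21 / 5 + 1/5)) = B := by
      rw [hBdef]
      have h0 : (0:ℝ) < Real.sqrt 21 + 1 := by linarith
      field_simp
      ring
    rw [hbase]
    norm_num
  -- exponent
  set m := n - 1 with hmdef
  have hm2 : 2 ≤ m := by omega
  have hmn : m + 1 = n := by omega
  have hcast : ((n:ℝ) - 1) = (m:ℝ) := by
    have h : (n:ℝ) = (m:ℝ) + 1 := by exact_mod_cast congrArg (Nat.cast : ℕ → ℝ) hmn.symm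
    rw [h]; ring
  have hRnpow : Rn n (1/5) ^ m = (5/6:ℝ)^m * B := by
    rw [hval, hcast, mul_pow, one_div, Real.rpow_inv_natCast_pow hBpos.le (by omega)]
  have hRnpos : 0 < Rn n (1/5) := by
    rw [hval]; positivity
  have hr0 : 0 < r := lt_of_lt_of_le hRnpos hlam
  -- key numeric inequality : 4 ≤ 3^n * r^m
  have hkey0 : (4:ℝ) ≤ 3^n * r^m := by
    have h2 : Rn n (1/5) ^ m ≤ r ^ m := pow_le_pow_left₀ hRnpos.le hlam m
    have h3 : ((5:ℝ)/2)^2 ≤ (5/2:ℝ)^m := pow_le_pow_right₀ (by norm_num) hm2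
    have h4 : (5/18:ℝ) ≤ B := by
      rw [hBdef, div_le_div_iff₀ (by norm_num) (by positivity)]
      nlinarith
    have h5 : (4:ℝ) ≤ 3^n * ((5/6:ℝ)^m * B) := by
      have : (3:ℝ)^n * ((5/6:ℝ)^m * B) = 3 * ((5/2:ℝ)^m * B) := by
        rw [← hmn, pow_succ]
        rw [show ((5:ℝ)/2)^m = 3^m * (5/6)^m by rw [← mul_pow]; norm_num]
        ring
      rw [this]
      nlinarith [pow_pos (show (0:ℝ) < 5/2 by norm_num) m]
    calc (4:ℝ) ≤ 3^n * ((5/6:ℝ)^m * B) := h5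
      _ = 3^n * (Rn n (1/5))^m := by rw [hRnpow]
      _ ≤ 3^n * r^m := by
          have : (0:ℝ) < 3^n := by positivity
          nlinarith
  have hkey : 4 * r ≤ 3^n * r^n := by
    have : (3:ℝ)^n * r^n = (3^n * r^m) * r := by
      rw [← hmn, pow_succ]; ring
    rw [this]
    nlinarith
  -- the step lemma
  have step : ∀ w : ℂ, 3 * r ≤ ‖w‖ →
      w ^ n ≠ lam ∧ 3 * r ≤ ‖w ^ n + lam ^ 2 / (w ^ n - lam)‖ := by
    intro w hw
    have hwn : 4 * r ≤ ‖w ^ n‖ := by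
      rw [norm_pow]
      calc 4 * r ≤ 3^n * r^n := hkey
        _ = (3*r)^n := by rw [mul_pow]
        _ ≤ ‖w‖^n := pow_le_pow_left₀ (by positivity) hw n
    have hden : 3 * r ≤ ‖w ^ n - lam‖ := by
      have h := norm_sub_norm_le (w ^ n) lam
      rw [← hrdef] at h
      linarith
    have hdenpos : 0 < ‖w ^ n - lam‖ := lt_of_lt_of_le (by positivity) hden
    have hne : w ^ n ≠ lam := by
      intro h
      rw [h, sub_self] at hdenpos
      simp at hdenpos
    refine ⟨hne, ?_⟩
    have hfrac : ‖lam^2 / (w^n - lam)‖ ≤ r / 3 := by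
      rw [norm_div, norm_pow, ← hrdef, div_le_iff₀ hdenpos]
      nlinarith
    have h := norm_sub_norm_le (w ^ n) (-(lam ^ 2 / (w ^ n - lam)))
    simp only [sub_neg_eq_add, norm_neg] at h
    linarith
  have main : ∀ j : ℕ, 3 * r ≤
      ‖(fun w : ℂ => w ^ n + lam ^ 2 / (w ^ n - lam))^[j] (3 * lam)‖ := by
    intro j
    induction j with
    | zero =>
      simp only [Function.iterate_zero, id_eq, norm_mul]
      have : ‖(3:ℂ)‖ = 3 := by norm_num
      rw [this]
    | succ j ih =>
      rw [Function.iterate_succ_apply']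
      exact (step _ ih).2
  exact ⟨main k, (step _ (main k)).1⟩
end

section
/- Let n ≥ 3 be an integer and λ ∈ ℂ with λ ≠ 0. Then at least one of the following two alternatives holds: (a) for every z ∈ ℂ with |z + λ| ≤ |λ|/5, one has z^n ≠ λ and |f_λ(z) + λ| < |λ|/5; or (b) for every z ∈ ℂ with |z| ≥ 3|λ|, one has z^n ≠ λ and |f_λ(z)| > 3|λ|. (This is the dichotomy underlying the fact that if the free critical value v₀ = −λ is attracted to ∞ then the free critical value v₁ = 3λ lies in the immediate basin of ∞.) -/
/-- For `n ≥ 3` and `λ ≠ 0`, at least one of the following holds: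
(a) `f_λ` maps the closed disk `D̄(-λ, |λ|/5)` into its interior (avoiding poles); or
(b) `f_λ` maps `{|z| ≥ 3|λ|}` into `{|z| > 3|λ|}` (avoiding poles). -/
theorem stmt11 (n : ℕ) (hn : 3 ≤ n) (lam : ℂ) (hlam : lam ≠ 0) :
    (∀ z : ℂ, ‖z + lam‖ ≤ ‖lam‖ / 5 →
        z ^ n ≠ lam ∧
          ‖(z ^ n + lam ^ 2 / (z ^ n - lam)) + lam‖ < ‖lam‖ / 5) ∨
    (∀ z : ℂ, 3 * ‖lam‖ ≤ ‖z‖ →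
        z ^ n ≠ lam ∧
          3 * ‖lam‖ < ‖z ^ n + lam ^ 2 / (z ^ n - lam)‖) := by
  set r := ‖lam‖ with hrdef
  have hr : 0 < r := norm_pos_iff.mpr hlam
  have habsle : ∀ a b : ℂ, ‖a‖ - ‖b‖ ≤ ‖a - b‖ :=
    fun a b => norm_sub_norm_le a b
  rcases le_or_gt r (2/5) with hcase | hcase
  · -- case (a)
    left
    intro z hz
    -- |z| ≤ 6r/5
    have hzabs : ‖z‖ ≤ 6 * r / 5 := by
      have : ‖z‖ = ‖(z + lam) - lam‖ := by ring_nf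
      rw [this]
      calc ‖(z + lam) - lam‖ ≤ ‖z + lam‖ + ‖lam‖ :=
            norm_sub_le _ _
        _ ≤ r / 5 + r := add_le_add hz le_rfl
        _ = 6 * r / 5 := by ring
    have hz1 : ‖z‖ ≤ 1 := by nlinarith
    -- |z^n| ≤ (6r/5)^3
    have hw : ‖z ^ n‖ ≤ 216 * r ^ 3 / 125 := by
      rw [norm_pow]
      calc ‖z‖ ^ n ≤ ‖z‖ ^ 3 :=
            pow_le_pow_of_le_one (norm_nonneg z) hz1 hn
        _ ≤ (6 * r / 5) ^ 3 := by
            apply pow_le_pow_left₀ (norm_nonneg z) hzabs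
        _ = 216 * r ^ 3 / 125 := by ring
    have hr2 : r ^ 2 ≤ 4 / 25 := by nlinarith
    have hwlt : ‖z ^ n‖ < r := by nlinarith
    have hne : z ^ n ≠ lam := by
      intro h
      rw [h] at hwlt
      exact lt_irrefl _ hwlt
    refine ⟨hne, ?_⟩
    have hdenom : 2261 * r / 3125 ≤ ‖z ^ n - lam‖ := by
      have h1 : r - ‖z ^ n‖ ≤ ‖z ^ n - lam‖ := by
        have h2 := habsle lam (z ^ n)
        rw [← norm_neg (lam - z ^ n)] at h2
        simpa [neg_sub] using h2
      nlinarith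
    have hdpos : 0 < ‖z ^ n - lam‖ := by nlinarith
    have hsub : z ^ n - lam ≠ 0 := by
      intro h
      rw [h] at hdpos
      simp at hdpos
    -- identity: f(z) + λ = (z^n)^2 / (z^n - λ)
    have hid : (z ^ n + lam ^ 2 / (z ^ n - lam)) + lam = (z ^ n) ^ 2 / (z ^ n - lam) := by
      field_simp
      ring
    rw [hid, norm_div, norm_pow]
    rw [div_lt_iff₀ hdpos]
    have habs : 0 ≤ ‖z ^ n‖ := norm_nonneg _
    have hr4 : r ^ 4 ≤ 16 / 625 := by nlinarith
    nlinarith [mul_le_mul hw hw habs (by positivity : (0:ℝ) ≤ 216 * r ^ 3 / 125),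
      mul_le_mul_of_nonneg_left hdenom (by positivity : (0:ℝ) ≤ r / 5)]
  · -- case (b)
    right
    intro z hz
    have hz1 : 1 ≤ ‖z‖ := by nlinarith
    have hw : 108 * r / 25 ≤ ‖z ^ n‖ := by
      rw [norm_pow]
      calc (108 : ℝ) * r / 25 ≤ 27 * r ^ 3 := by
            nlinarith [mul_nonneg (mul_nonneg hr.le (by linarith : (0:ℝ) ≤ r - 2/5))
              (by linarith : (0:ℝ) ≤ r + 2/5)]
        _ = (3 * r) ^ 3 := by ring
        _ ≤ ‖z‖ ^ 3 := by
            apply pow_le_pow_left₀ (by positivity) hz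
        _ ≤ ‖z‖ ^ n := pow_le_pow_right₀ hz1 hn
    have hwgt : r < ‖z ^ n‖ := by nlinarith
    have hne : z ^ n ≠ lam := by
      intro h
      rw [h] at hwgt
      exact lt_irrefl _ hwgt
    refine ⟨hne, ?_⟩
    have hdenom : 83 * r / 25 ≤ ‖z ^ n - lam‖ := by
      have h1 : ‖z ^ n‖ - r ≤ ‖z ^ n - lam‖ := habsle (z ^ n) lam
      nlinarith
    have hdpos : 0 < ‖z ^ n - lam‖ := by nlinarith
    have hcbound : ‖lam ^ 2 / (z ^ n - lam)‖ ≤ 25 * r / 83 := by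
      rw [norm_div, norm_pow]
      rw [div_le_iff₀ hdpos]
      nlinarith
    have htri : ‖z ^ n‖ - ‖lam ^ 2 / (z ^ n - lam)‖ ≤
        ‖z ^ n + lam ^ 2 / (z ^ n - lam)‖ := by
      have h3 := habsle (z ^ n) (-(lam ^ 2 / (z ^ n - lam)))
      rw [sub_neg_eq_add, norm_neg] at h3
      exact h3
    nlinarith
end

section
/- Let n = 3 and let λ ∈ ℂ satisfy λ² − λ + 1 = 0. Then λ ≠ 0, 0³ ≠ λ, (−λ)³ ≠ λ, and f_λ(0) = −λ and f_λ(−λ) = 0; that is, {0, −λ} is a super-attracting periodic orbit of period two for f_λ. (This holds in particular for λ = e^{πi/3}.) -/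
/-- For `n = 3` and `λ` with `λ² - λ + 1 = 0`: `λ ≠ 0`, `0³ ≠ λ`, `(-λ)³ ≠ λ`, and
`f_λ(0) = -λ`, `f_λ(-λ) = 0`, so `{0, -λ}` is a super-attracting 2-cycle of `f_λ`. -/
theorem stmt12 (lam : ℂ) (h : lam ^ 2 - lam + 1 = 0) :
    lam ≠ 0 ∧ (0 : ℂ) ^ 3 ≠ lam ∧ (-lam) ^ 3 ≠ lam ∧
      (0 : ℂ) ^ 3 + lam ^ 2 / ((0 : ℂ) ^ 3 - lam) = -lam ∧
      (-lam) ^ 3 + lam ^ 2 / ((-lam) ^ 3 - lam) = 0 := by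
  have hne : lam ≠ 0 := by rintro rfl; simp at h
  have hone : lam ≠ 1 := by rintro rfl; norm_num at h
  have hcube : lam ^ 3 = -1 := by
    have : lam ^ 3 + 1 = (lam + 1) * (lam ^ 2 - lam + 1) := by ring
    rw [h, mul_zero] at this; linear_combination this
  refine ⟨hne, by simpa using hne.symm, ?_, ?_, ?_⟩
  · have : (-lam) ^ 3 = 1 := by rw [neg_pow]; rw [hcube]; ring
    rw [this]; exact hone.symm
  · rw [zero_pow (by norm_num), zero_sub, zero_add, div_neg,
      pow_two, mul_div_assoc, div_self hne, mul_one]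
  · have h1 : (-lam) ^ 3 = 1 := by rw [neg_pow]; rw [hcube]; ring
    rw [h1]
    have h2 : (1 : ℂ) - lam ≠ 0 := by
      intro hc; exact hone (by linear_combination -hc)
    field_simp
    linear_combination h
end

section
/- Let n = 2 and λ = 1/4, so f_λ(z) = z² + (1/16)/(z² − 1/4). Set z₁ = (1 + √5)/4 and z₂ = (1 − √5)/4. Then z₁² ≠ 1/4 and z₂² ≠ 1/4, f_λ(z₁) = z₁ and f_λ(z₂) = z₂, and f_λ'(z₁) = 1 and f_λ'(z₂) = 1; that is, z₁ and z₂ are parabolic fixed points of f_λ with multiplier 1. -/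
lemma aux_deriv (z : ℂ) (hz : z ^ 2 - 1 / 4 ≠ 0) :
    deriv (fun z : ℂ => z ^ 2 + (1 / 4 : ℂ) ^ 2 / (z ^ 2 - 1 / 4)) z
      = 2 * z - (1 / 16) * (2 * z) / (z ^ 2 - 1 / 4) ^ 2 := by
  have h1 : HasDerivAt (fun z : ℂ => z ^ 2 - 1 / 4) (2 * z) z := by
    simpa using (hasDerivAt_pow 2 z).sub_const (1 / 4)
  have h2 : HasDerivAt (fun z : ℂ => (1 / 4 : ℂ) ^ 2 / (z ^ 2 - 1 / 4))
      ((0 * (z ^ 2 - 1 / 4) - (1 / 4 : ℂ) ^ 2 * (2 * z)) / (z ^ 2 - 1 / 4) ^ 2) z :=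
    (hasDerivAt_const z ((1 / 4 : ℂ) ^ 2)).div h1 hz
  have h3 : HasDerivAt (fun z : ℂ => z ^ 2 + (1 / 4 : ℂ) ^ 2 / (z ^ 2 - 1 / 4))
      (2 * z + (0 * (z ^ 2 - 1 / 4) - (1 / 4 : ℂ) ^ 2 * (2 * z)) / (z ^ 2 - 1 / 4) ^ 2) z := by
    simpa using ((hasDerivAt_pow 2 z).fun_add h2)
  rw [h3.deriv]
  ring

/-- For `n = 2` and `λ = 1/4`: the points `z₁ = (1+√5)/4` and `z₂ = (1-√5)/4` satisfy
`zᵢ² ≠ 1/4`, `f_λ(zᵢ) = zᵢ`, and `f_λ'(zᵢ) = 1`; i.e. they are parabolic fixed points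
of `f_λ` with multiplier `1`. -/
theorem stmt16 :
    let f : ℂ → ℂ := fun z => z ^ 2 + (1 / 4 : ℂ) ^ 2 / (z ^ 2 - 1 / 4)
    let z₁ : ℂ := (1 + (Real.sqrt 5 : ℂ)) / 4
    let z₂ : ℂ := (1 - (Real.sqrt 5 : ℂ)) / 4
    z₁ ^ 2 ≠ 1 / 4 ∧ z₂ ^ 2 ≠ 1 / 4 ∧ f z₁ = z₁ ∧ f z₂ = z₂ ∧
      deriv f z₁ = 1 ∧ deriv f z₂ = 1 := by
  intro f z₁ z₂
  set s : ℂ := (Real.sqrt 5 : ℂ) with hs_def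
  have hs : s ^ 2 = 5 := by
    rw [hs_def, ← Complex.ofReal_pow, Real.sq_sqrt (by norm_num : (0:ℝ) ≤ 5)]
    norm_num
  have hs1 : (1 : ℂ) + s ≠ 0 := by
    intro h
    have : s = -1 := by linear_combination h
    rw [this] at hs; norm_num at hs
  have hs2 : (1 : ℂ) - s ≠ 0 := by
    intro h
    have : s = 1 := by linear_combination -h
    rw [this] at hs; norm_num at hs
  have h1 : z₁ ^ 2 - 1 / 4 = (1 + s) / 8 := by
    show ((1 + s) / 4) ^ 2 - 1 / 4 = (1 + s) / 8
    field_simp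
    linear_combination 8 * hs
  have h2 : z₂ ^ 2 - 1 / 4 = (1 - s) / 8 := by
    show ((1 - s) / 4) ^ 2 - 1 / 4 = (1 - s) / 8
    field_simp
    linear_combination 8 * hs
  have hn1 : z₁ ^ 2 - 1 / 4 ≠ 0 := by
    rw [h1]; exact div_ne_zero hs1 (by norm_num)
  have hn2 : z₂ ^ 2 - 1 / 4 ≠ 0 := by
    rw [h2]; exact div_ne_zero hs2 (by norm_num)
  refine ⟨by simpa [sub_eq_zero] using hn1, by simpa [sub_eq_zero] using hn2, ?_, ?_, ?_, ?_⟩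
  · show z₁ ^ 2 + (1 / 4 : ℂ) ^ 2 / (z₁ ^ 2 - 1 / 4) = z₁
    rw [h1]
    show ((1 + s) / 4) ^ 2 + (1 / 4 : ℂ) ^ 2 / ((1 + s) / 8) = (1 + s) / 4
    field_simp
    linear_combination (s - 1) * hs
  · show z₂ ^ 2 + (1 / 4 : ℂ) ^ 2 / (z₂ ^ 2 - 1 / 4) = z₂
    rw [h2]
    show ((1 - s) / 4) ^ 2 + (1 / 4 : ℂ) ^ 2 / ((1 - s) / 8) = (1 - s) / 4
    field_simp
    linear_combination (-(s + 1)) * hs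
  · rw [aux_deriv z₁ hn1, h1]
    show 2 * ((1 + s)/4) - 1/16 * (2 * ((1+s)/4)) / ((1 + s)/8)^2 = 1
    field_simp
    linear_combination 32 * hs
  · rw [aux_deriv z₂ hn2, h2]
    show 2 * ((1 - s)/4) - 1/16 * (2 * ((1-s)/4)) / ((1 - s)/8)^2 = 1
    field_simp
    linear_combination 32 * hs
end

section
/- Let n = 2 and let λ be a real number with λ > 1/4. Then for every real number x with x² ≠ λ, one has f_λ(x) ≠ x; equivalently, the real polynomial x⁴ − x³ − λx² + λx + λ² has no real roots. In particular, f_λ has no fixed points on the real axis when λ > 1/4. -/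
/-- For `n = 2` and real `λ > 1/4`: `f_λ` has no fixed point on the real axis;
equivalently, the real polynomial `x⁴ - x³ - λx² + λx + λ²` has no real roots. -/
theorem stmt18 (lam : ℝ) (hlam : 1 / 4 < lam) :
    (∀ x : ℝ, x ^ 2 ≠ lam → x ^ 2 + lam ^ 2 / (x ^ 2 - lam) ≠ x) ∧
    ∀ x : ℝ, x ^ 4 - x ^ 3 - lam * x ^ 2 + lam * x + lam ^ 2 ≠ 0 := by
  have key : ∀ x : ℝ, x ^ 4 - x ^ 3 - lam * x ^ 2 + lam * x + lam ^ 2 ≠ 0 := by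
    intro x h
    rcases eq_or_ne x 0 with rfl | hx0
    · nlinarith
    · nlinarith [sq_nonneg (x ^ 2 - x / 2 - lam),
        mul_pos (show (0:ℝ) < lam - 1/4 by linarith) (pow_pos (abs_pos.mpr hx0) 2),
        sq_abs x]
  refine ⟨fun x hx h => key x ?_, key⟩
  have hne : x ^ 2 - lam ≠ 0 := sub_ne_zero.mpr hx
  field_simp at h
  nlinarith [h]
end
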